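/- arXiv:1206.3439 — 4 statements merged into one kernel-verified Lean document; each statement's English description precedes it below -/
import Mathlib

section
/- Let p : B → E be a pure morphism of commutative rings. If f : X → Y is a B-linear map that is the equalizer (kernel of the difference) of a parallel pair g, h : Y ⇉ Z of B-linear maps, and the pair (E ⊗[B] g, E ⊗[B] h) admits a split equalizer in Mod_E (i.e., there exist E-linear maps exhibiting the equalizer of E ⊗ g and E ⊗ h as a split equalizer), then f is a pure morphism of B-modules. -/
open TensorProduct

universe u

/-!
Write `M⋆` for the character module `Hom(M, ℚ/ℤ)`. A `B`-linear map `f` is pure exactly when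
`f⋆` has a `B`-linear section: the evaluation pairing `M⋆ ⊗ M → ℚ/ℤ` lifts along `M⋆ ⊗ f`, and
conversely `(N ⊗ M)⋆ = Hom(N, M⋆)`. Applied to `B → E`, purity yields a section `χ` of
`E⋆ → B⋆`, and `χ` extends every character `β` of a `B`-module `M` to a character of `E ⊗ M`
restricting to `β` along `m ↦ 1 ⊗ m`, naturally in `M`.

The split equalizer gives `r = e ∘ s ∘ (1 ⊗ -) : Y → E ⊗ Y`, equal to `1 ⊗ -` on the image
of `f` and killed by `E ⊗ (g - h)`. Extending a character of `Y` to `E ⊗ Y` and pulling it back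
along `r` is an endomorphism of `Y⋆` that does not change the restriction to the image of `f`,
and kills every character vanishing there, because such a character factors through `g - h`
by injectivity of `ℚ/ℤ`. Hence it descends to a section of `f⋆ : Y⋆ → X⋆`.
-/

namespace CharacterModule

variable {R : Type*} [CommRing R] {M M' N : Type*}
  [AddCommGroup M] [Module R M] [AddCommGroup M'] [Module R M'] [AddCommGroup N] [Module R N]

lemma dual_lTensor_uncurry (f : M →ₗ[R] M') (ψ : N →ₗ[R] CharacterModule M') :
    dual (f.lTensor N) (uncurry ψ) = uncurry (dual f ∘ₗ ψ) := by
  ext v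
  induction v with
  | zero => simp only [map_zero]
  | tmul n m => rfl
  | add v w hv hw => simp only [map_add, hv, hw]

lemma exists_dual_eq_of_ker_le (k : M →ₗ[R] M') (β : CharacterModule M)
    (hβ : ∀ y ∈ LinearMap.ker k, β y = 0) : ∃ γ, dual k γ = β := by
  let βbar : CharacterModule (M ⧸ LinearMap.ker k) :=
    QuotientAddGroup.lift (LinearMap.ker k).toAddSubgroup β hβ
  obtain ⟨γ, hγ⟩ := dual_surjective_of_injective ((LinearMap.ker k).liftQ k le_rfl)
    (LinearMap.ker_eq_bot.mp ((LinearMap.ker k).ker_liftQ_eq_bot' k rfl)) βbar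
  exact ⟨γ, by ext y; exact DFunLike.congr_fun hγ (Submodule.Quotient.mk y)⟩

end CharacterModule

namespace LinearMap

variable {R : Type*} [CommRing R] {M M' : Type*}
  [AddCommGroup M] [Module R M] [AddCommGroup M'] [Module R M']

open CharacterModule in
lemma exists_dual_comp_eq_id_of_lTensor_injective (f : M →ₗ[R] M')
    (hf : Function.Injective (f.lTensor (CharacterModule M))) :
    ∃ u : CharacterModule M →ₗ[R] CharacterModule M', dual f ∘ₗ u = id := by
  obtain ⟨c, hc⟩ := dual_surjective_of_injective _ hf (uncurry id)
  refine ⟨curry c, homEquiv.injective ?_⟩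
  change CharacterModule.uncurry (dual f ∘ₗ curry c) = CharacterModule.uncurry id
  rw [← dual_lTensor_uncurry, ← hc]
  exact congrArg _ (homEquiv.apply_symm_apply c)

open CharacterModule in
lemma lTensor_injective_of_dual_comp_eq_id (f : M →ₗ[R] M')
    {u : CharacterModule M →ₗ[R] CharacterModule M'} (hu : dual f ∘ₗ u = id)
    (N : Type*) [AddCommGroup N] [Module R N] : Function.Injective (f.lTensor N) := by
  refine dual_surjective_iff_injective.mp fun φ ↦ ⟨uncurry (u ∘ₗ curry φ), ?_⟩
  rw [dual_lTensor_uncurry, ← comp_assoc, hu, id_comp]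
  exact homEquiv.apply_symm_apply φ

lemma exists_comp_eq_id_of_ker_le {d : M →ₗ[R] M'} (hd : Function.Surjective d)
    {v : M →ₗ[R] M} (hv : ker d ≤ ker v) (hdv : d ∘ₗ v = d) :
    ∃ u : M' →ₗ[R] M, d ∘ₗ u = id := by
  refine ⟨(ker d).liftQ v hv ∘ₗ (d.quotKerEquivOfSurjective hd).symm.toLinearMap, ?_⟩
  ext m'
  obtain ⟨m, rfl⟩ := hd m'
  have hmk : (d.quotKerEquivOfSurjective hd).symm (d m) = Submodule.Quotient.mk m := by
    rw [LinearEquiv.symm_apply_eq, quotKerEquivOfSurjective_apply_mk]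
  simp only [comp_apply, LinearEquiv.coe_coe, hmk, Submodule.liftQ_apply, id_apply]
  exact LinearMap.congr_fun hdv m

end LinearMap

namespace CharacterModule

variable {B E : Type*} [CommRing B] [CommRing E] [Algebra B E]

lemma exists_dual_algebraLinearMap_comp_eq_id
    (hp : Function.Injective fun φ : CharacterModule B ↦ φ ⊗ₜ[B] (1 : E)) :
    ∃ χ : CharacterModule B →ₗ[B] CharacterModule E,
      dual (Algebra.linearMap B E) ∘ₗ χ = LinearMap.id := by
  refine (Algebra.linearMap B E).exists_dual_comp_eq_id_of_lTensor_injective ?_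
  have : (Algebra.linearMap B E).lTensor (CharacterModule B) =
      (TensorProduct.mk B (CharacterModule B) E).flip 1 ∘ₗ
        (TensorProduct.rid B _).toLinearMap := by
    ext φ
    simp [Algebra.algebraMap_eq_smul_one]
  rw [this, LinearMap.coe_comp]
  exact hp.comp (TensorProduct.rid B _).injective

variable (χ : CharacterModule B →ₗ[B] CharacterModule E)
variable {M M' : Type*} [AddCommGroup M] [Module B M] [AddCommGroup M'] [Module B M']

variable (M) in
noncomputable def baseChange : CharacterModule M →ₗ[B] CharacterModule (E ⊗[B] M) :=
  dual (TensorProduct.comm B E M).toLinearMap ∘ₗ uncurry ∘ₗ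
    LinearMap.llcomp B M _ _ χ ∘ₗ curry ∘ₗ dual (TensorProduct.rid B M).toLinearMap

lemma baseChange_tmul (β : CharacterModule M) (ε : E) (m : M) :
    baseChange χ M β (ε ⊗ₜ m) = χ (dual (LinearMap.toSpanSingleton B M m) β) ε :=
  rfl

lemma baseChange_one_tmul (hχ : dual (Algebra.linearMap B E) ∘ₗ χ = LinearMap.id)
    (β : CharacterModule M) (m : M) : baseChange χ M β (1 ⊗ₜ m) = β m := by
  have hφ := LinearMap.congr_fun hχ (dual (LinearMap.toSpanSingleton B M m) β)
  rw [LinearMap.comp_apply, LinearMap.id_apply] at hφ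
  rw [baseChange_tmul, ← map_one (algebraMap B E)]
  exact (DFunLike.congr_fun hφ 1).trans (congrArg β (one_smul B m))

lemma baseChange_comp_dual (q : M →ₗ[B] M') :
    baseChange χ M ∘ₗ dual q = dual ((q.baseChange E).restrictScalars B) ∘ₗ baseChange χ M' := by
  ext β v
  induction v with
  | zero => simp only [map_zero]
  | tmul ε m =>
    change baseChange χ M (dual q β) (ε ⊗ₜ m) = baseChange χ M' β (ε ⊗ₜ q m)
    rw [baseChange_tmul, baseChange_tmul, ← LinearMap.comp_apply (dual _), ← dual_comp,
      LinearMap.comp_toSpanSingleton]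
  | add v w hv hw => simp only [map_add, hv, hw]

end CharacterModule

open CharacterModule in
theorem LinearMap.exists_dual_comp_eq_id_of_baseChange_retraction
    {B E : Type*} [CommRing B] [CommRing E] [Algebra B E]
    (hp : Function.Injective fun φ : CharacterModule B ↦ φ ⊗ₜ[B] (1 : E))
    {X Y Z : Type*} [AddCommGroup X] [Module B X] [AddCommGroup Y] [Module B Y]
    [AddCommGroup Z] [Module B Z] {f : X →ₗ[B] Y} (hf : Function.Injective f)
    {k : Y →ₗ[B] Z} (hfk : range f = ker k) (r : Y →ₗ[B] E ⊗[B] Y)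
    (hrf : ∀ x, r (f x) = 1 ⊗ₜ f x) (hkr : (k.baseChange E).restrictScalars B ∘ₗ r = 0) :
    ∃ u : CharacterModule X →ₗ[B] CharacterModule Y, dual f ∘ₗ u = id := by
  obtain ⟨χ, hχ⟩ := exists_dual_algebraLinearMap_comp_eq_id hp
  refine exists_comp_eq_id_of_ker_le (v := dual r ∘ₗ CharacterModule.baseChange χ Y)
    (dual_surjective_of_injective f hf) (fun β hβ ↦ ?_) ?_
  · obtain ⟨γ, rfl⟩ := exists_dual_eq_of_ker_le k β fun y hy ↦ by
      obtain ⟨x, rfl⟩ := hfk ▸ hy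
      exact DFunLike.congr_fun hβ x
    rw [mem_ker, ← comp_apply _ (dual k), comp_assoc, CharacterModule.baseChange_comp_dual,
      ← comp_assoc, ← dual_comp, hkr, dual_zero, zero_comp, zero_apply]
  · ext β x
    exact CharacterModule.baseChange_one_tmul χ hχ β (f x) ▸
      congrArg (CharacterModule.baseChange χ Y β) (hrf x)

/-- Lemma: if `p : B → E` is pure and `f : X → Y` is the equalizer of a parallel pair
`g, h : Y ⇉ Z` of `B`-linear maps whose base change to `E` admits a split equalizer,
then `f` is a pure morphism of `B`-modules. -/
theorem equalizer_of_split_pair_is_pure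
    {B E : Type u} [CommRing B] [CommRing E] [Algebra B E]
    (hp : ∀ (N : Type u) [AddCommGroup N] [Module B N],
      Function.Injective (fun n : N => (n ⊗ₜ[B] (1 : E) : N ⊗[B] E)))
    {X Y Z : Type u} [AddCommGroup X] [Module B X] [AddCommGroup Y] [Module B Y]
    [AddCommGroup Z] [Module B Z]
    (f : X →ₗ[B] Y) (g h : Y →ₗ[B] Z)
    (hfinj : Function.Injective f)
    (hker : LinearMap.range f = LinearMap.ker (g - h))
    (hsplit : ∃ (W : Type u) (_ : AddCommGroup W) (_ : Module E W)
        (e : W →ₗ[E] E ⊗[B] Y) (s : (E ⊗[B] Y) →ₗ[E] W)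
        (t : (E ⊗[B] Z) →ₗ[E] E ⊗[B] Y),
      (LinearMap.baseChange E g).comp e = (LinearMap.baseChange E h).comp e ∧
      s.comp e = LinearMap.id ∧
      t.comp (LinearMap.baseChange E h) = LinearMap.id ∧
      t.comp (LinearMap.baseChange E g) = e.comp s) :
    ∀ (N : Type u) [AddCommGroup N] [Module B N],
      Function.Injective (LinearMap.lTensor N f) := by
  obtain ⟨W, _, _, e, s, t, hge, -, hth, htg⟩ := hsplit
  have hgf (x : X) : g (f x) = h (f x) :=
    sub_eq_zero.mp (LinearMap.mem_ker.mp (hker ▸ LinearMap.mem_range_self f x))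
  have hes (y : E ⊗[B] Y) (hy : g.baseChange E y = h.baseChange E y) : e (s y) = y := by
    rw [← LinearMap.comp_apply e s, ← htg, LinearMap.comp_apply, hy, ← LinearMap.comp_apply, hth,
      LinearMap.id_apply]
  obtain ⟨u, hu⟩ := LinearMap.exists_dual_comp_eq_id_of_baseChange_retraction (hp _) hfinj hker
    ((e ∘ₗ s).restrictScalars B ∘ₗ TensorProduct.mk B E Y 1)
    (fun x ↦ hes _ (by simp [hgf]))
    (by ext y; simpa [LinearMap.baseChange_sub, sub_eq_zero] using LinearMap.congr_fun hge _)
  exact f.lTensor_injective_of_dual_comp_eq_id hu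
end

section
/- Let U : B → A be a right adjoint functor where B is an exact (Barr-exact) category and A has kernel pairs of split epimorphisms. Then U is monadic if and only if U is conservative and U preserves those regular epimorphisms whose kernel pairs are U-split. -/
open CategoryTheory CategoryTheory.Limits

universe v₁ v₂ u₁ u₂

variable {C : Type u₁} [Category.{v₁} C]

/-- An internal equivalence relation on an object `X` of a category with pullbacks:
a jointly monic pair `p₁, p₂ : R ⇉ X` which is reflexive, symmetric and transitive. -/
structure InternalEquivRelation [HasPullbacks C] (X : C) where
  /-- the object of the relation -/
  R : C
  /-- first projection -/
  p₁ : R ⟶ X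
  /-- second projection -/
  p₂ : R ⟶ X
  jointly_mono : ∀ {W : C} (a b : W ⟶ R), a ≫ p₁ = b ≫ p₁ → a ≫ p₂ = b ≫ p₂ → a = b
  /-- reflexivity -/
  refl : X ⟶ R
  refl_p₁ : refl ≫ p₁ = 𝟙 X
  refl_p₂ : refl ≫ p₂ = 𝟙 X
  /-- symmetry -/
  symm : R ⟶ R
  symm_p₁ : symm ≫ p₁ = p₂
  symm_p₂ : symm ≫ p₂ = p₁
  /-- transitivity -/
  trans : pullback p₂ p₁ ⟶ R
  trans_p₁ : trans ≫ p₁ = pullback.fst p₂ p₁ ≫ p₁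
  trans_p₂ : trans ≫ p₂ = pullback.snd p₂ p₁ ≫ p₂

/-- A Barr-exact category: finitely complete, kernel pairs have coequalizers,
regular epimorphisms are stable under pullback, and every internal equivalence
relation is effective (i.e. is a kernel pair). -/
class BarrExact (C : Type u₁) [Category.{v₁} C] extends HasFiniteLimits C : Prop where
  hasCoeqOfKernelPair : ∀ {X Y : C} (f : X ⟶ Y),
    HasCoequalizer (pullback.fst f f) (pullback.snd f f)
  regularEpi_stable : ∀ {X Y Z : C} (f : X ⟶ Y) (g : Z ⟶ Y),
    Nonempty (RegularEpi f) → Nonempty (RegularEpi (pullback.snd f g))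
  effective : ∀ {X : C} (r : InternalEquivRelation X),
    ∃ (Y : C) (q : X ⟶ Y), IsKernelPair q r.p₁ r.p₂


/-!
By Beck's theorem it suffices that every `U`-split pair `f, g : X ⟶ Y` has a coequalizer which `U`
preserves. Let `q` be the split coequalizer of `U f, U g`, and factor
`(fst ≫ g, snd ≫ g) : ker f ⟶ Y × Y` as a regular epi `e` followed by a relation `R ↪ Y × Y`.
Under `U` this factorisation is compared with a split epimorphism from `U (ker f)` onto the kernel
pair of `q`: so `e` has a `U`-split kernel pair, `U e` is a regular epi, and `U R` is the kernel
pair of `q`. Conservativity lifts reflexivity, symmetry and transitivity to `R`, so by exactness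
`R` is the kernel pair of its coequalizer `π`. The kernel pair of `π` is `U`-split as well, so `U π`
is a regular epi, and `π`, `U π` coequalize `f, g` and `U f, U g`: a map coequalizes `f, g` iff it
coequalizes `R`, both before and after applying `U`.
-/

namespace CategoryTheory

section SplitCoequalizers

variable {D : Type*} [Category D]

noncomputable def IsKernelPair.isSplitCoequalizer {R X Y : D} {a b : R ⟶ X} {d : X ⟶ Y}
    [IsSplitEpi d] (h : IsKernelPair d a b) : IsSplitCoequalizer a b d where
  rightSection := section_ d
  leftSection := h.lift (d ≫ section_ d) (𝟙 X) (by simp)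
  condition := h.w

theorem IsSplitCoequalizer.exists_isSplitEpi_of_isKernelPair {X Y Z K P : D} {f g : X ⟶ Y}
    {π : Y ⟶ Z} (hs : IsSplitCoequalizer f g π) {k₁ k₂ : K ⟶ X} (hk : IsKernelPair f k₁ k₂)
    {p₁ p₂ : P ⟶ Y} (hp : IsKernelPair π p₁ p₂) :
    ∃ d : K ⟶ P, d ≫ p₁ = k₁ ≫ g ∧ d ≫ p₂ = k₂ ≫ g ∧ IsSplitEpi d := by
  refine ⟨hp.lift (k₁ ≫ g) (k₂ ≫ g) (by simp only [Category.assoc, ← hs.condition, hk.w_assoc]),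
    by simp, by simp, IsSplitEpi.mk' ⟨hk.lift (p₁ ≫ hs.leftSection) (p₂ ≫ hs.leftSection) ?_, ?_⟩⟩
  · simp only [Category.assoc, hs.leftSection_top, hp.w_assoc]
  · apply hp.hom_ext <;> simp [hs.leftSection_bottom]

theorem exists_iso_hom_comp_eq_of_strongEpi_comp_mono {W R P V : D} {e : W ⟶ R} {d : W ⟶ P}
    {u : R ⟶ V} {ι : P ⟶ V} [StrongEpi e] [StrongEpi d] [Mono u] [Mono ι] (h : e ≫ u = d ≫ ι) :
    ∃ ψ : R ≅ P, ψ.hom ≫ ι = u :=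
  let F : StrongEpiMonoFactorisation (e ≫ u) := ⟨⟨R, u, e, rfl⟩⟩
  let F' : StrongEpiMonoFactorisation (e ≫ u) := ⟨⟨P, ι, d, h.symm⟩⟩
  ⟨_, IsImage.isoExt_hom_m F.toMonoIsImage F'.toMonoIsImage⟩

noncomputable def Limits.Cofork.IsColimit.ofCoequalizesIff {X X' Y Q : D} {f g : X ⟶ Y}
    {f' g' : X' ⟶ Y} {π : Y ⟶ Q} {w : f ≫ π = g ≫ π} (hπ : IsColimit (Cofork.ofπ π w))
    (h : ∀ {W : D} (k : Y ⟶ W), f ≫ k = g ≫ k ↔ f' ≫ k = g' ≫ k) :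
    IsColimit (Cofork.ofπ π ((h π).1 w)) :=
  Cofork.IsColimit.mk' _ fun s =>
    ⟨Cofork.IsColimit.desc hπ s.π ((h s.π).2 s.condition), Cofork.IsColimit.π_desc' hπ _ _,
      fun hm => Cofork.IsColimit.hom_ext hπ (hm.trans (Cofork.IsColimit.π_desc' hπ _ _).symm)⟩

variable {E : Type*} [Category E]

theorem Limits.hasCoequalizer_and_preservesColimit_of_coequalizes_iff (U : D ⥤ E)
    {X Y R Q : D} {f g : X ⟶ Y} {p₁ p₂ : R ⟶ Y} {π : Y ⟶ Q} {w : p₁ ≫ π = p₂ ≫ π}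
    (hπ : IsColimit (Cofork.ofπ π w))
    (hUπ : IsColimit (Cofork.ofπ (U.map π) (by simp only [← U.map_comp, w]) :
      Cofork (U.map p₁) (U.map p₂)))
    (hD : ∀ {W : D} (k : Y ⟶ W), p₁ ≫ k = p₂ ≫ k ↔ f ≫ k = g ≫ k)
    (hE : ∀ {W : E} (k : U.obj Y ⟶ W), U.map p₁ ≫ k = U.map p₂ ≫ k ↔ U.map f ≫ k = U.map g ≫ k) :
    HasCoequalizer f g ∧ PreservesColimit (parallelPair f g) U :=
  have hπ' := Cofork.IsColimit.ofCoequalizesIff hπ hD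
  ⟨⟨⟨_, hπ'⟩⟩, preservesColimit_of_preserves_colimit_cocone hπ'
    ((isColimitMapCoconeCoforkEquiv U _).symm (Cofork.IsColimit.ofCoequalizesIff hUπ hE))⟩

theorem Functor.isSplitPair_kernelPair_of_isKernelPair_map (U : D ⥤ E) {R Y Q : D}
    {p₁ p₂ : R ⟶ Y} {π : Y ⟶ Q} [HasPullback π π] (hπ : IsKernelPair π p₁ p₂) {Z : E}
    {q : U.obj Y ⟶ Z} [IsSplitEpi q] (hq : IsKernelPair q (U.map p₁) (U.map p₂)) :
    U.IsSplitPair (pullback.fst π π) (pullback.snd π π) :=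
  ⟨_, _, ⟨IsKernelPair.isSplitCoequalizer <| hq.of_iso (f' := q) (g' := q)
    (U.mapIso hπ.isoPullback) (Iso.refl _) (Iso.refl _) (Iso.refl _)
    (by simp [← U.map_comp]) (by simp [← U.map_comp]) (by simp) (by simp)⟩⟩

theorem Functor.exists_lift_of_map_lift (U : D ⥤ E) [U.ReflectsIsomorphisms]
    [U.PreservesMonomorphisms] {R Y V : D} (m : R ⟶ Y) [Mono m] (θ : V ⟶ Y) [HasPullback m θ]
    [PreservesLimit (cospan m θ) U] (χ : U.obj V ⟶ U.obj R) (hχ : χ ≫ U.map m = U.map θ) :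
    ∃ r : V ⟶ R, r ≫ m = θ := by
  have hU := isLimitOfHasPullbackOfPreservesLimit U m θ
  have : IsSplitEpi (U.map (pullback.snd m θ)) := IsSplitEpi.mk'
    ⟨PullbackCone.IsLimit.lift hU χ (𝟙 _) (by simpa using hχ),
      PullbackCone.IsLimit.lift_snd hU χ (𝟙 _) (by simpa using hχ)⟩
  have : IsIso (U.map (pullback.snd m θ)) := isIso_of_mono_of_isSplitEpi _
  have : IsIso (pullback.snd m θ) := isIso_of_reflects_iso _ U
  exact ⟨CategoryTheory.inv (pullback.snd m θ) ≫ pullback.fst m θ, by simp [pullback.condition]⟩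

theorem Functor.exists_lift_of_isKernelPair_map [HasPullbacks D] (U : D ⥤ E)
    [U.IsRightAdjoint] [U.ReflectsIsomorphisms] {R Y : D} [HasBinaryProduct Y Y] {p₁ p₂ : R ⟶ Y}
    [Mono (prod.lift p₁ p₂)] {Z : E} {q : U.obj Y ⟶ Z} (hR : IsKernelPair q (U.map p₁) (U.map p₂))
    ⦃V : D⦄ (a b : V ⟶ Y) (hab : U.map a ≫ q = U.map b ≫ q) :
    ∃ r : V ⟶ R, r ≫ p₁ = a ∧ r ≫ p₂ = b := by
  have hYY := isLimitOfHasBinaryProductOfPreservesLimit U Y Y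
  obtain ⟨r, hr⟩ := U.exists_lift_of_map_lift (prod.lift p₁ p₂) (prod.lift a b)
    (hR.lift (U.map a) (U.map b) hab) (by
      apply BinaryFan.IsLimit.hom_ext hYY
      · change _ ≫ U.map prod.fst = _ ≫ U.map prod.fst
        simp only [Category.assoc, ← U.map_comp, prod.lift_fst, IsKernelPair.lift_fst]
      · change _ ≫ U.map prod.snd = _ ≫ U.map prod.snd
        simp only [Category.assoc, ← U.map_comp, prod.lift_snd, IsKernelPair.lift_snd])
  have hr₁ := hr =≫ prod.fst
  have hr₂ := hr =≫ prod.snd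
  rw [Category.assoc, prod.lift_fst, prod.lift_fst] at hr₁
  rw [Category.assoc, prod.lift_snd, prod.lift_snd] at hr₂
  exact ⟨r, hr₁, hr₂⟩

end SplitCoequalizers

section Monadicity

open CategoryTheory.Monad

variable {A : Type u₁} {B : Type u₂} [Category.{v₁} A] [Category.{v₂} B]

def Functor.HasPreservedCoequalizersOfIsSplitPair (U : B ⥤ A) : Prop :=
  ∀ ⦃X Y : B⦄ (f g : X ⟶ Y), U.IsSplitPair f g →
    HasCoequalizer f g ∧ PreservesColimit (parallelPair f g) U

def Functor.PreservesRegularEpiOfSplitKernelPair [HasPullbacks B] (U : B ⥤ A) : Prop :=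
  ∀ ⦃X Y : B⦄ (f : X ⟶ Y), Nonempty (RegularEpi f) →
    U.IsSplitPair (pullback.fst f f) (pullback.snd f f) → Nonempty (RegularEpi (U.map f))

namespace Adjunction

variable {F : A ⥤ B} {U : B ⥤ A} (adj : F ⊣ U)

theorem isSplitPair_beckPair (X : adj.toMonad.Algebra) :
    U.IsSplitPair (F.map X.a) (adj.counit.app (F.obj X.A)) :=
  ⟨_, _, ⟨beckSplitCoequalizer X⟩⟩

theorem isSplitPair_counitPair (Y : B) :
    U.IsSplitPair (F.map (U.map (adj.counit.app Y))) (adj.counit.app (F.obj (U.obj Y))) :=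
  adj.isSplitPair_beckPair ((comparison adj).obj Y)

variable (hU : U.HasPreservedCoequalizersOfIsSplitPair)
include hU

theorem comparison_essSurj : (comparison adj).EssSurj where
  mem_essImage X := by
    obtain ⟨Q, π, φ, hπφ⟩ : ∃ (Q : B) (π : F.obj X.A ⟶ Q) (φ : U.obj Q ≅ X.A),
        U.map π ≫ φ.hom = X.a := by
      obtain ⟨_, _⟩ := hU _ _ (adj.isSplitPair_beckPair X)
      have hUπ := isColimitCoforkMapOfIsColimit U _
        (coequalizerIsCoequalizer (F.map X.a) (adj.counit.app (F.obj X.A)))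
      exact ⟨_, _, hUπ.coconePointUniqueUpToIso (beckCoequalizer X),
        hUπ.comp_coconePointUniqueUpToIso_hom (beckCoequalizer X) WalkingParallelPair.one⟩
    have hunit : adj.unit.app X.A ≫ X.a = 𝟙 X.A := X.unit
    have : IsSplitEpi (U.map π) := IsSplitEpi.mk' ⟨φ.hom ≫ adj.unit.app X.A, by
      rw [← cancel_mono φ.hom, Category.assoc, Category.assoc, hπφ, hunit]
      simp⟩
    refine ⟨Q, ⟨Algebra.isoMk φ ?_⟩⟩
    change U.map (F.map φ.hom) ≫ X.a = U.map (adj.counit.app Q) ≫ φ.hom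
    let a : U.obj (F.obj X.A) ⟶ X.A := X.a
    have hassoc : U.map (F.map a) ≫ a = U.map (adj.counit.app (F.obj X.A)) ≫ a := X.assoc.symm
    rw [← cancel_epi (U.map (F.map (U.map π)))]
    calc U.map (F.map (U.map π)) ≫ U.map (F.map φ.hom) ≫ a = U.map (F.map a) ≫ a := by
          rw [← U.map_comp_assoc, ← F.map_comp, hπφ]
      _ = U.map (adj.counit.app (F.obj X.A)) ≫ U.map π ≫ φ.hom := by rw [hassoc, hπφ]
      _ = U.map (F.map (U.map π)) ≫ U.map (adj.counit.app Q) ≫ φ.hom := by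
          rw [← U.map_comp_assoc, ← U.map_comp_assoc, (adj.counit_naturality π).symm]

variable [U.ReflectsIsomorphisms]

noncomputable def isColimitCounitCofork (Y : B) :
    IsColimit (Cofork.ofπ (adj.counit.app Y) (adj.counit_naturality (adj.counit.app Y)) :
      Cofork (F.map (U.map (adj.counit.app Y))) (adj.counit.app (F.obj (U.obj Y)))) := by
  obtain ⟨_, _⟩ := hU _ _ (adj.isSplitPair_counitPair Y)
  have := reflectsColimit_of_reflectsIsomorphisms
    (parallelPair (F.map (U.map (adj.counit.app Y))) (adj.counit.app (F.obj (U.obj Y)))) U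
  exact isColimitOfIsColimitCoforkMap U _ (beckCoequalizer ((comparison adj).obj Y))

theorem comparison_faithful : (comparison adj).Faithful where
  map_injective {Y Y'} f g h := by
    have hfg : U.map f = U.map g := congrArg Algebra.Hom.f h
    apply Cofork.IsColimit.hom_ext (adj.isColimitCounitCofork hU Y)
    calc adj.counit.app Y ≫ f = F.map (U.map f) ≫ adj.counit.app Y' :=
          (adj.counit_naturality f).symm
      _ = adj.counit.app Y ≫ g := by rw [hfg]; exact adj.counit_naturality g

theorem comparison_full : (comparison adj).Full where
  map_surjective {Y Y'} h := by
    let φ : U.obj Y ⟶ U.obj Y' := h.f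
    have hφ : U.map (F.map φ) ≫ U.map (adj.counit.app Y') = U.map (adj.counit.app Y) ≫ φ := h.h
    have w : F.map (U.map (adj.counit.app Y)) ≫ F.map φ ≫ adj.counit.app Y' =
        adj.counit.app (F.obj (U.obj Y)) ≫ F.map φ ≫ adj.counit.app Y' := by
      rw [← F.map_comp_assoc, ← hφ]
      simp
    obtain ⟨f, hf⟩ := Cofork.IsColimit.desc' (adj.isColimitCounitCofork hU Y) _ w
    refine ⟨f, Algebra.Hom.ext ?_⟩
    have hUf := congrArg U.map hf
    simp only [Cofork.π_ofπ, U.map_comp] at hUf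
    change U.map f = φ
    calc U.map f = adj.unit.app (U.obj Y) ≫ U.map (adj.counit.app Y) ≫ U.map f := by simp
      _ = φ := by rw [hUf]; simp

end Adjunction

-- Mathlib's `Monad.monadicOfHasPreservesGSplitCoequalizersOfReflectsIsomorphisms` needs `A` and
-- `B` to have their morphisms in the same universe.
theorem Functor.nonempty_monadicRightAdjoint {U : B ⥤ A} [U.IsRightAdjoint]
    [U.ReflectsIsomorphisms] (hU : U.HasPreservedCoequalizersOfIsSplitPair) :
    Nonempty (MonadicRightAdjoint U) :=
  let adj := Adjunction.ofIsRightAdjoint U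
  have := adj.comparison_faithful hU
  have := adj.comparison_full hU
  have := adj.comparison_essSurj hU
  ⟨{ L := _, adj := adj, eqv := { } }⟩

variable (U : B ⥤ A) [MonadicRightAdjoint U]

theorem Functor.reflectsIsomorphisms_of_monadicRightAdjoint : U.ReflectsIsomorphisms :=
  reflectsIsomorphisms_of_iso (comparisonForget (monadicAdjunction U))

theorem Functor.preservesColimit_of_isSplitPair_of_monadicRightAdjoint {X Y : B} (f g : X ⟶ Y)
    [U.IsSplitPair f g] : PreservesColimit (parallelPair f g) U := by
  have : HasColimit (parallelPair f g ⋙ U) :=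
    hasColimit_of_iso (F := parallelPair (U.map f) (U.map g)) (diagramIsoParallelPair _)
  have : CreatesColimit (parallelPair f g) U := by
    apply +allowSynthFailures monadicCreatesColimitOfPreservesColimit
    all_goals
      refine @preservesColimit_of_iso_diagram _ _ _ _ _ _ _ _ _ (diagramIsoParallelPair _).symm ?_
      dsimp
      infer_instance
  infer_instance

theorem Functor.preservesRegularEpiOfSplitKernelPair_of_monadicRightAdjoint [HasPullbacks B] :
    U.PreservesRegularEpiOfSplitKernelPair := by
  intro X Y f ⟨hf⟩ _
  have hk := IsKernelPair.of_hasPullback f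
  have := U.preservesColimit_of_isSplitPair_of_monadicRightAdjoint
    (pullback.fst f f) (pullback.snd f f)
  exact ⟨⟨_, _, _, _, isColimitCoforkMapOfIsColimit U hk.w (hk.toCoequalizer hf)⟩⟩

end Monadicity

end CategoryTheory

instance BarrExact.regular [BarrExact C] : Regular C where
  hasCoequalizer_of_isKernelPair {_ _ _ f _ _} h := by
    have := BarrExact.hasCoeqOfKernelPair f
    exact hasColimit_of_iso (F := parallelPair (pullback.fst f f) (pullback.snd f f))
      (parallelPair.ext h.isoPullback (Iso.refl _) (by simp) (by simp))
  regularEpiIsStableUnderBaseChange := .mk' fun _ _ _ f g _ ⟨hg⟩ => by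
    have : IsRegularEpi (pullback.snd g f) := ⟨BarrExact.regularEpi_stable g f hg⟩
    rw [← pullbackSymmetry_hom_comp_snd]
    exact ((MorphismProperty.regularEpi C).cancel_left_of_respectsIso _ _).2 this

theorem InternalEquivRelation.exists_isKernelPair_coequalizer [BarrExact C] {X : C}
    (r : InternalEquivRelation X) :
    ∃ _ : HasCoequalizer r.p₁ r.p₂, IsKernelPair (coequalizer.π r.p₁ r.p₂) r.p₁ r.p₂ := by
  obtain ⟨_, q, hq⟩ := BarrExact.effective r
  have := Regular.hasCoequalizer_of_isKernelPair hq
  refine ⟨this, IsKernelPair.cancel_right (f₂ := coequalizer.desc q hq.w)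
    (coequalizer.condition _ _) ?_⟩
  rwa [coequalizer.π_desc q hq.w]

noncomputable def InternalEquivRelation.ofPreimageKernelPair [HasPullbacks C] {D : Type*}
    [Category D] (U : C ⥤ D) {X R : C} {Z : D} {q : U.obj X ⟶ Z} {p₁ p₂ : R ⟶ X}
    (jointly_mono : ∀ {W : C} (a b : W ⟶ R), a ≫ p₁ = b ≫ p₁ → a ≫ p₂ = b ≫ p₂ → a = b)
    (w : U.map p₁ ≫ q = U.map p₂ ≫ q)
    (lift : ∀ ⦃V : C⦄ (a b : V ⟶ X), U.map a ≫ q = U.map b ≫ q →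
      ∃ r : V ⟶ R, r ≫ p₁ = a ∧ r ≫ p₂ = b) :
    InternalEquivRelation X :=
  have hrefl := lift (𝟙 X) (𝟙 X) rfl
  have hsymm := lift p₂ p₁ w.symm
  have htrans := lift (pullback.fst p₂ p₁ ≫ p₁) (pullback.snd p₂ p₁ ≫ p₂) (by
    rw [U.map_comp, U.map_comp, Category.assoc, Category.assoc, w, ← U.map_comp_assoc,
      pullback.condition, U.map_comp_assoc, w])
  { R, p₁, p₂, jointly_mono
    refl := hrefl.choose
    refl_p₁ := hrefl.choose_spec.1
    refl_p₂ := hrefl.choose_spec.2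
    symm := hsymm.choose
    symm_p₁ := hsymm.choose_spec.1
    symm_p₂ := hsymm.choose_spec.2
    trans := htrans.choose
    trans_p₁ := htrans.choose_spec.1
    trans_p₂ := htrans.choose_spec.2 }

section Duskin

variable {A : Type u₁} {B : Type u₂} [Category.{v₁} A] [Category.{v₂} B] {U : B ⥤ A}
  [U.IsRightAdjoint]

theorem exists_relation_image_isKernelPair_map [Regular B]
    (hU : U.PreservesRegularEpiOfSplitKernelPair)
    {X Y : B} {f g : X ⟶ Y} {Z : A} {q : U.obj Y ⟶ Z}
    (hs : IsSplitCoequalizer (U.map f) (U.map g) q) [HasPullback q q] :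
    ∃ (R : B) (p₁ p₂ : R ⟶ Y) (e : pullback f f ⟶ R), Mono (prod.lift p₁ p₂) ∧ Epi e ∧
      e ≫ p₁ = pullback.fst f f ≫ g ∧ e ≫ p₂ = pullback.snd f f ≫ g ∧
      IsKernelPair q (U.map p₁) (U.map p₂) := by
  let F := Regular.strongEpiMonoFactorisation
    (prod.lift (pullback.fst f f ≫ g) (pullback.snd f f ≫ g))
  have hP := IsKernelPair.of_hasPullback q
  obtain ⟨d, hd₁, hd₂, _⟩ :=
    hs.exists_isSplitEpi_of_isKernelPair ((IsKernelPair.of_hasPullback f).map U) hP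
  -- `A` need not have binary products: `U (Y ⨯ Y)` plays the role of `U Y ⨯ U Y`.
  have hYY := isLimitOfHasBinaryProductOfPreservesLimit U Y Y
  obtain ⟨ι, hι₁, hι₂⟩ : ∃ ι : pullback q q ⟶ U.obj (Y ⨯ Y),
      ι ≫ U.map prod.fst = pullback.fst q q ∧ ι ≫ U.map prod.snd = pullback.snd q q :=
    ⟨_, (BinaryFan.IsLimit.lift' hYY (pullback.fst q q) (pullback.snd q q)).2⟩
  have : Mono ι := ⟨fun a b h => hP.hom_ext
    (by simpa [hι₁] using h =≫ U.map prod.fst) (by simpa [hι₂] using h =≫ U.map prod.snd)⟩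
  have hc : U.map F.e ≫ U.map F.m = d ≫ ι := by
    rw [← U.map_comp, F.fac]
    apply BinaryFan.IsLimit.hom_ext hYY
    · change _ ≫ U.map prod.fst = _ ≫ U.map prod.fst
      simp only [Category.assoc, hι₁, hd₁, ← U.map_comp, prod.lift_fst]
    · change _ ≫ U.map prod.snd = _ ≫ U.map prod.snd
      simp only [Category.assoc, hι₂, hd₂, ← U.map_comp, prod.lift_snd]
  have hk := IsKernelPair.comp_of_mono (f₂ := U.map F.m) ((IsKernelPair.of_hasPullback F.e).map U)
  rw [hc] at hk
  have : IsRegularEpi (U.map F.e) := ⟨hU _ IsRegularEpi.regularEpi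
    ⟨_, _, ⟨(IsKernelPair.cancel_right_of_mono hk).isSplitCoequalizer⟩⟩⟩
  obtain ⟨ψ, hψ⟩ := exists_iso_hom_comp_eq_of_strongEpi_comp_mono hc
  have hm : prod.lift (F.m ≫ prod.fst) (F.m ≫ prod.snd) = F.m :=
    prod.hom_ext (prod.lift_fst _ _) (prod.lift_snd _ _)
  refine ⟨F.I, F.m ≫ prod.fst, F.m ≫ prod.snd, F.e, by rw [hm]; infer_instance, inferInstance,
    by rw [← Category.assoc, F.fac, prod.lift_fst], by rw [← Category.assoc, F.fac, prod.lift_snd],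
    hP.of_iso ψ.symm (Iso.refl _) (Iso.refl _) (Iso.refl _) ?_ ?_ (by simp) (by simp)⟩
  · simp [← hψ, hι₁]
  · simp [← hψ, hι₂]

theorem hasPreservedCoequalizersOfIsSplitPair_of_preservesRegularEpiOfSplitKernelPair
    [BarrExact B] [U.ReflectsIsomorphisms]
    (hA : ∀ {X Y : A} (f : X ⟶ Y), IsSplitEpi f → HasPullback f f)
    (hU : U.PreservesRegularEpiOfSplitKernelPair) : U.HasPreservedCoequalizersOfIsSplitPair := by
  rintro X Y f g ⟨Z, q, ⟨hs⟩⟩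
  have : IsSplitEpi q := IsSplitEpi.mk' ⟨hs.rightSection, hs.rightSection_π⟩
  have := hA q this
  obtain ⟨R, p₁, p₂, e, _, _, he₁, he₂, hR⟩ := exists_relation_image_isKernelPair_map hU hs
  have lift := U.exists_lift_of_isKernelPair_map hR
  obtain ⟨ρ, hρ₁, hρ₂⟩ := lift f g hs.condition
  let r := InternalEquivRelation.ofPreimageKernelPair U (q := q)
    (fun a b h₁ h₂ => (cancel_mono (prod.lift p₁ p₂)).1 (by ext <;> simp [h₁, h₂])) hR.w lift
  obtain ⟨_, hπ⟩ : ∃ _ : HasCoequalizer p₁ p₂, IsKernelPair (coequalizer.π p₁ p₂) p₁ p₂ :=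
    r.exists_isKernelPair_coequalizer
  obtain ⟨hUπ⟩ := hU (coequalizer.π p₁ p₂) ⟨coequalizerRegular _ _⟩
    (U.isSplitPair_kernelPair_of_isKernelPair_map hπ hR)
  refine hasCoequalizer_and_preservesColimit_of_coequalizes_iff U
    (coequalizerIsCoequalizer p₁ p₂) (IsKernelPair.toCoequalizer (hπ.map U) hUπ)
    (fun k => ⟨fun h => ?_, fun h => ?_⟩) (fun k => ⟨fun h => ?_, fun h => ?_⟩)
  · rw [← hρ₁, ← hρ₂, Category.assoc, Category.assoc, h]
  · rw [← cancel_epi e, reassoc_of% he₁, reassoc_of% he₂, ← h, pullback.condition_assoc]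
  · rw [← hρ₁, ← hρ₂, U.map_comp, U.map_comp, Category.assoc, Category.assoc, h]
  · obtain ⟨k', rfl⟩ : ∃ k', q ≫ k' = k := ⟨_, Cofork.IsColimit.π_desc' hs.isCoequalizer k h⟩
    rw [hR.w_assoc]

end Duskin

/-- Duskin's theorem (variation): a right adjoint `U : B ⥤ A` from a Barr-exact
category to a category with kernel pairs of split epimorphisms is monadic iff
it is conservative and preserves regular epimorphisms with `U`-split kernel pairs. -/
theorem monadic_iff_conservative_and_preserves_regularEpis
    {A : Type u₁} {B : Type u₂} [Category.{v₁} A] [Category.{v₂} B]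
    [BarrExact B]
    (hA : ∀ {X Y : A} (f : X ⟶ Y), IsSplitEpi f → HasPullback f f)
    (U : B ⥤ A) [U.IsRightAdjoint] :
    Nonempty (MonadicRightAdjoint U) ↔
      (U.ReflectsIsomorphisms ∧
        ∀ ⦃X Y : B⦄ (f : X ⟶ Y), Nonempty (RegularEpi f) →
          U.IsSplitPair (pullback.fst f f) (pullback.snd f f) →
          Nonempty (RegularEpi (U.map f))) := by
  constructor
  · rintro ⟨_⟩
    exact ⟨U.reflectsIsomorphisms_of_monadicRightAdjoint,
      U.preservesRegularEpiOfSplitKernelPair_of_monadicRightAdjoint⟩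
  · rintro ⟨_, hU⟩
    exact Functor.nonempty_monadicRightAdjoint
      (hasPreservedCoequalizersOfIsSplitPair_of_preservesRegularEpiOfSplitKernelPair hA hU)
end

section
/- Let p : B → E be a pure ring homomorphism such that the functor E ⊗[B] - : B-Alg → B-Alg on commutative B-algebras preserves all equalizers. Then E is a flat B-module. -/
/-!
For an ideal `I` of `B`, the `B`-algebra maps `map I.mkQ` and `map 0` from the square-zero
extension `B ⊕ B` to `B ⊕ B ⧸ I` have equalizer `B ⊕ I`, which contains `I` as a linear retract
through `inr`. Tensoring the injection `B ⊕ I → B ⊕ B` with `E` therefore makes `E ⊗ I → E ⊗ B`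
injective, and this for every ideal is flatness.
-/

open TensorProduct

namespace TrivSqZeroExt

variable {R M : Type*} [CommRing R] [AddCommGroup M] [Module R M] [Module Rᵐᵒᵖ M]
  [IsCentralScalar R M] (N : Submodule R M)

theorem mem_equalizer_map_mkQ_map_zero_iff (x : TrivSqZeroExt R M) :
    x ∈ AlgHom.equalizer (map N.mkQ) (map 0) ↔ x.snd ∈ N := by
  simp [AlgHom.mem_equalizer, TrivSqZeroExt.ext_iff, Submodule.Quotient.mk_eq_zero]

def inrToEqualizer : N →ₗ[R] AlgHom.equalizer (map N.mkQ) (map (0 : M →ₗ[R] M ⧸ N)) where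
  toFun n := ⟨inr (n : M), (mem_equalizer_map_mkQ_map_zero_iff N _).2 n.2⟩
  map_add' m n := Subtype.ext (inr_add R (m : M) n)
  map_smul' r n := Subtype.ext (inr_smul R r (n : M))

def sndOfEqualizer : AlgHom.equalizer (map N.mkQ) (map (0 : M →ₗ[R] M ⧸ N)) →ₗ[R] N where
  toFun x := ⟨snd (x : TrivSqZeroExt R M), (mem_equalizer_map_mkQ_map_zero_iff N _).1 x.2⟩
  map_add' x y := Subtype.ext (snd_add (x : TrivSqZeroExt R M) y)
  map_smul' r x := Subtype.ext (snd_smul r (x : TrivSqZeroExt R M))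

theorem sndOfEqualizer_comp_inrToEqualizer :
    sndOfEqualizer N ∘ₗ inrToEqualizer N = LinearMap.id := by
  ext; rfl

theorem equalizer_val_comp_inrToEqualizer :
    (AlgHom.equalizer (map N.mkQ) (map 0)).val.toLinearMap ∘ₗ inrToEqualizer N =
      inrHom R M ∘ₗ N.subtype := rfl

theorem lTensor_subtype_injective_of_lTensor_equalizer_val_injective (E : Type*) [AddCommGroup E]
    [Module R E]
    (h : Function.Injective
      ((AlgHom.equalizer (map N.mkQ) (map (0 : M →ₗ[R] M ⧸ N))).val.toLinearMap.lTensor E)) :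
    Function.Injective (N.subtype.lTensor E) := by
  have hinr : Function.Injective ((inrToEqualizer N).lTensor E) :=
    Function.LeftInverse.injective (g := (sndOfEqualizer N).lTensor E) fun x => by
      rw [← LinearMap.lTensor_comp_apply, sndOfEqualizer_comp_inrToEqualizer, LinearMap.lTensor_id,
        LinearMap.id_apply]
  have := h.comp hinr
  rw [← LinearMap.coe_comp, ← LinearMap.lTensor_comp, equalizer_val_comp_inrToEqualizer,
    LinearMap.lTensor_comp, LinearMap.coe_comp] at this
  exact this.of_comp

end TrivSqZeroExt

theorem flat_of_pure_of_preserves_algebra_equalizers_general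
    {B E : Type u} [CommRing B] [CommRing E] [Algebra B E]
    (hpres : ∀ (Y Z : Type u) [CommRing Y] [CommRing Z] [Algebra B Y] [Algebra B Z]
      (g h : Y →ₐ[B] Z),
      Function.Injective
          (Algebra.TensorProduct.map (AlgHom.id B E) (AlgHom.equalizer g h).val) ∧
        (Algebra.TensorProduct.map (AlgHom.id B E) (AlgHom.equalizer g h).val).range =
          AlgHom.equalizer (Algebra.TensorProduct.map (AlgHom.id B E) g)
            (Algebra.TensorProduct.map (AlgHom.id B E) h)) :
    Module.Flat B E :=
  Module.Flat.iff_lTensor_injective'.2 fun I =>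
    TrivSqZeroExt.lTensor_subtype_injective_of_lTensor_equalizer_val_injective I E
      (hpres _ _ (TrivSqZeroExt.map I.mkQ) (TrivSqZeroExt.map 0)).1

/-- If `p : B → E` is pure and the functor `E ⊗[B] -` on commutative `B`-algebras
preserves all equalizers, then `E` is a flat `B`-module. -/
theorem flat_of_pure_of_preserves_algebra_equalizers
    {B E : Type u} [CommRing B] [CommRing E] [Algebra B E]
    (hp : ∀ (N : Type u) [AddCommGroup N] [Module B N],
      Function.Injective (fun n : N => (n ⊗ₜ[B] (1 : E) : N ⊗[B] E)))
    (hpres : ∀ (Y Z : Type u) [CommRing Y] [CommRing Z] [Algebra B Y] [Algebra B Z]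
      (g h : Y →ₐ[B] Z),
      Function.Injective
          (Algebra.TensorProduct.map (AlgHom.id B E) (AlgHom.equalizer g h).val) ∧
        (Algebra.TensorProduct.map (AlgHom.id B E) (AlgHom.equalizer g h).val).range =
          AlgHom.equalizer (Algebra.TensorProduct.map (AlgHom.id B E) g)
            (Algebra.TensorProduct.map (AlgHom.id B E) h)) :
    Module.Flat B E :=
  flat_of_pure_of_preserves_algebra_equalizers_general hpres
end

section
/- Let D be a directed poset and suppose a B-linear map p : B → E is the directed colimit of B-linear maps p_d : B → E_d (with identity on the source) where each p_d is a split monomorphism of B-modules. Then for any parallel pair g, h : Y ⇉ Z of B-linear maps, the equalizer of (g, h) maps by a pure monomorphism into the colimit over d of the equalizers of (E_d ⊗[B] g, E_d ⊗[B] h), provided the comparison maps are the canonical ones. -/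
/-!
Each equalizer `K_d = ker (E_d ⊗ g - E_d ⊗ h)` receives `ker (g - h)` through `y ↦ p_d(1) ⊗ y`,
and contracting the `E_d`-factor with the retraction `q_d` splits this map. The comparison map
is the colimit of these split monomorphisms; after tensoring with any `N` they stay split, and
since tensor products commute with direct limits, an element killed in the colimit is already
killed at some stage `d`, where the retraction shows it was zero.
-/

open TensorProduct

namespace Module.DirectLimit

variable {R : Type*} {ι : Type*} [Preorder ι] [IsDirectedOrder ι] [DecidableEq ι]
  {G : ι → Type*} {M : Type*}

theorem of_comp_injective [Semiring R] [∀ i, AddCommMonoid (G i)] [∀ i, Module R (G i)]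
    {f : ∀ i j, i ≤ j → G i →ₗ[R] G j} [DirectedSystem G (f · · ·)] [AddCommMonoid M] [Module R M]
    {σ : ∀ i, M →ₗ[R] G i}
    (hσ : ∀ i j (hij : i ≤ j), f i j hij ∘ₗ σ i = σ j) (hinj : ∀ i, Function.Injective (σ i))
    (i : ι) : Function.Injective (of R ι G f i ∘ₗ σ i) := by
  intro x y hxy
  obtain ⟨j, hij, hj⟩ := exists_eq_of_of_eq hxy
  apply hinj j
  rw [← hσ i j hij]
  exact hj

theorem lTensor_of_comp_injective [CommSemiring R] [∀ i, AddCommMonoid (G i)]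
    [∀ i, Module R (G i)] {f : ∀ i j, i ≤ j → G i →ₗ[R] G j} [DirectedSystem G (f · · ·)]
    [AddCommMonoid M] [Module R M] (N : Type*) [AddCommMonoid N] [Module R N]
    {σ : ∀ i, M →ₗ[R] G i}
    (hσ : ∀ i j (hij : i ≤ j), f i j hij ∘ₗ σ i = σ j) {ρ : ∀ i, G i →ₗ[R] M}
    (hρσ : ∀ i, ρ i ∘ₗ σ i = LinearMap.id) (i : ι) :
    Function.Injective (LinearMap.lTensor N (of R ι G f i ∘ₗ σ i)) := by
  have hsplit : ∀ j, Function.Injective (LinearMap.lTensor N (σ j)) := fun j =>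
    LinearMap.injective_of_comp_eq_id _ (LinearMap.lTensor N (ρ j)) <| by
      rw [← LinearMap.lTensor_comp, hρσ, LinearMap.lTensor_id]
  have hinj := of_comp_injective (f := fun i j hij => LinearMap.lTensor N (f i j hij))
    (fun i j hij => by rw [← LinearMap.lTensor_comp, hσ]) hsplit i
  have hcomm : (directLimitRight f N).toLinearMap ∘ₗ LinearMap.lTensor N (of R ι G f i ∘ₗ σ i) =
      of R ι _ (fun i j hij => LinearMap.lTensor N (f i j hij)) i ∘ₗ LinearMap.lTensor N (σ i) :=
    TensorProduct.ext' fun n x => by simp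
  rw [← hcomm, LinearMap.coe_comp] at hinj
  exact hinj.of_comp

end Module.DirectLimit

section Equalizer

variable {R : Type*} [CommRing R] {E Y Z : Type*} [AddCommGroup E] [Module R E]
  [AddCommGroup Y] [Module R Y] [AddCommGroup Z] [Module R Z] (g h : Y →ₗ[R] Z)

def equalizerTmul (e : E) :
    LinearMap.ker (g - h) →ₗ[R] LinearMap.ker (LinearMap.lTensor E g - LinearMap.lTensor E h) :=
  (TensorProduct.mk R E Y e).restrict fun y hy => by
    simp [sub_eq_zero.mp hy]

@[simp]
theorem coe_equalizerTmul_apply (e : E) (y : LinearMap.ker (g - h)) :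
    (equalizerTmul g h e y : E ⊗[R] Y) = e ⊗ₜ (y : Y) :=
  rfl

theorem lid_rTensor_comp_lTensor_sub (φ : E →ₗ[R] R) :
    (TensorProduct.lid R Z).toLinearMap ∘ₗ LinearMap.rTensor Z φ ∘ₗ
        (LinearMap.lTensor E g - LinearMap.lTensor E h) =
      (g - h) ∘ₗ (TensorProduct.lid R Y).toLinearMap ∘ₗ LinearMap.rTensor Y φ :=
  TensorProduct.ext' fun a y => by simp [smul_sub]

def equalizerContract (φ : E →ₗ[R] R) :
    LinearMap.ker (LinearMap.lTensor E g - LinearMap.lTensor E h) →ₗ[R] LinearMap.ker (g - h) :=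
  ((TensorProduct.lid R Y).toLinearMap ∘ₗ LinearMap.rTensor Y φ).restrict fun t ht => by
    rw [LinearMap.mem_ker, ← LinearMap.comp_apply, ← lid_rTensor_comp_lTensor_sub]
    simp [LinearMap.mem_ker.mp ht]

theorem equalizerContract_comp_equalizerTmul {φ : E →ₗ[R] R} {e : E} (he : φ e = 1) :
    equalizerContract g h φ ∘ₗ equalizerTmul g h e = LinearMap.id :=
  LinearMap.ext fun y => Subtype.ext <| by simp [equalizerContract, LinearMap.restrict_apply, he]

end Equalizer

theorem canonical_map_to_limit_of_equalizers_is_pure_general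
    {B : Type u} [CommRing B] {ι : Type u} [Preorder ι] [IsDirected ι (· ≤ ·)]
    [DecidableEq ι] [Nonempty ι]
    {E : ι → Type u} [∀ i, AddCommGroup (E i)] [∀ i, Module B (E i)]
    (e : ∀ i j, i ≤ j → E i →ₗ[B] E j)
    -- the split monomorphisms `p_d : B → E_d`, compatible with the transition maps
    (p : ∀ i, B →ₗ[B] E i) (hpe : ∀ i j (hij : i ≤ j), (e i j hij).comp (p i) = p j)
    (q : ∀ i, E i →ₗ[B] B) (hq : ∀ i, (q i).comp (p i) = LinearMap.id)
    {Y Z : Type u} [AddCommGroup Y] [Module B Y] [AddCommGroup Z] [Module B Z]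
    (g h : Y →ₗ[B] Z)
    -- the directed system of equalizers `K_d = ker (E_d ⊗ g - E_d ⊗ h)`
    (tK : ∀ i j, i ≤ j →
      LinearMap.ker (LinearMap.lTensor (E i) g - LinearMap.lTensor (E i) h) →ₗ[B]
        LinearMap.ker (LinearMap.lTensor (E j) g - LinearMap.lTensor (E j) h))
    (htK : ∀ i j (hij : i ≤ j)
        (x : LinearMap.ker (LinearMap.lTensor (E i) g - LinearMap.lTensor (E i) h)),
      ((tK i j hij x : E j ⊗[B] Y)) = LinearMap.rTensor Y (e i j hij) (x : E i ⊗[B] Y))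
    [DirectedSystem
      (fun i => LinearMap.ker (LinearMap.lTensor (E i) g - LinearMap.lTensor (E i) h))
      fun i j h' => tK i j h']
    -- membership of the canonical elements in the equalizers
    (hmem : ∀ (i : ι) (x : LinearMap.ker (g - h)),
      (p i 1) ⊗ₜ[B] (x : Y) ∈
        LinearMap.ker (LinearMap.lTensor (E i) g - LinearMap.lTensor (E i) h))
    -- the canonical comparison map
    (s : LinearMap.ker (g - h) →ₗ[B] Module.DirectLimit
      (fun i => LinearMap.ker (LinearMap.lTensor (E i) g - LinearMap.lTensor (E i) h)) tK)
    (hs : ∀ (i : ι) (x : LinearMap.ker (g - h)),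
      s x = Module.DirectLimit.of B ι
        (fun i => LinearMap.ker (LinearMap.lTensor (E i) g - LinearMap.lTensor (E i) h))
        tK i ⟨(p i 1) ⊗ₜ[B] (x : Y), hmem i x⟩) :
    (∀ (N : Type u) [AddCommGroup N] [Module B N],
      Function.Injective (LinearMap.lTensor N s)) ∧ Function.Injective s := by
  obtain ⟨i₀⟩ := ‹Nonempty ι›
  have hσ : ∀ i j (hij : i ≤ j),
      tK i j hij ∘ₗ equalizerTmul g h (p i 1) = equalizerTmul g h (p j 1) := fun i j hij =>
    LinearMap.ext fun x => Subtype.ext <| by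
      simp [htK, ← LinearMap.congr_fun (hpe i j hij) 1]
  have hρσ : ∀ i, equalizerContract g h (q i) ∘ₗ equalizerTmul g h (p i 1) = LinearMap.id :=
    fun i => equalizerContract_comp_equalizerTmul g h (LinearMap.congr_fun (hq i) 1)
  obtain rfl : s = Module.DirectLimit.of B ι _ tK i₀ ∘ₗ equalizerTmul g h (p i₀ 1) :=
    LinearMap.ext (hs i₀)
  exact ⟨fun N _ _ => Module.DirectLimit.lTensor_of_comp_injective N hσ hρσ i₀,
    Module.DirectLimit.of_comp_injective hσ
      (fun i => LinearMap.injective_of_comp_eq_id _ _ (hρσ i)) i₀⟩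

/-- If `p : B → E` is the directed colimit of split monomorphisms `p_d : B → E_d` of
`B`-modules, then for any parallel pair `g, h : Y ⇉ Z` of `B`-linear maps, the canonical
comparison map from the equalizer `ker (g - h)` to the directed colimit of the equalizers
`ker (E_d ⊗ g - E_d ⊗ h)` is a pure monomorphism. -/
theorem canonical_map_to_limit_of_equalizers_is_pure
    {B : Type u} [CommRing B] {ι : Type u} [Preorder ι] [IsDirected ι (· ≤ ·)]
    [DecidableEq ι] [Nonempty ι]
    {E : ι → Type u} [∀ i, AddCommGroup (E i)] [∀ i, Module B (E i)]
    (e : ∀ i j, i ≤ j → E i →ₗ[B] E j) [DirectedSystem E fun i j h => e i j h]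
    -- the split monomorphisms `p_d : B → E_d`, compatible with the transition maps
    (p : ∀ i, B →ₗ[B] E i) (hpe : ∀ i j (hij : i ≤ j), (e i j hij).comp (p i) = p j)
    (q : ∀ i, E i →ₗ[B] B) (hq : ∀ i, (q i).comp (p i) = LinearMap.id)
    {Y Z : Type u} [AddCommGroup Y] [Module B Y] [AddCommGroup Z] [Module B Z]
    (g h : Y →ₗ[B] Z)
    -- the directed system of equalizers `K_d = ker (E_d ⊗ g - E_d ⊗ h)`
    (tK : ∀ i j, i ≤ j →
      LinearMap.ker (LinearMap.lTensor (E i) g - LinearMap.lTensor (E i) h) →ₗ[B]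
        LinearMap.ker (LinearMap.lTensor (E j) g - LinearMap.lTensor (E j) h))
    (htK : ∀ i j (hij : i ≤ j)
        (x : LinearMap.ker (LinearMap.lTensor (E i) g - LinearMap.lTensor (E i) h)),
      ((tK i j hij x : E j ⊗[B] Y)) = LinearMap.rTensor Y (e i j hij) (x : E i ⊗[B] Y))
    [DirectedSystem
      (fun i => LinearMap.ker (LinearMap.lTensor (E i) g - LinearMap.lTensor (E i) h))
      fun i j h' => tK i j h']
    -- membership of the canonical elements in the equalizers
    (hmem : ∀ (i : ι) (x : LinearMap.ker (g - h)),
      (p i 1) ⊗ₜ[B] (x : Y) ∈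
        LinearMap.ker (LinearMap.lTensor (E i) g - LinearMap.lTensor (E i) h))
    -- the canonical comparison map
    (s : LinearMap.ker (g - h) →ₗ[B] Module.DirectLimit
      (fun i => LinearMap.ker (LinearMap.lTensor (E i) g - LinearMap.lTensor (E i) h)) tK)
    (hs : ∀ (i : ι) (x : LinearMap.ker (g - h)),
      s x = Module.DirectLimit.of B ι
        (fun i => LinearMap.ker (LinearMap.lTensor (E i) g - LinearMap.lTensor (E i) h))
        tK i ⟨(p i 1) ⊗ₜ[B] (x : Y), hmem i x⟩) :
    (∀ (N : Type u) [AddCommGroup N] [Module B N],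
      Function.Injective (LinearMap.lTensor N s)) ∧ Function.Injective s :=
  canonical_map_to_limit_of_equalizers_is_pure_general e p hpe q hq g h tK htK hmem s hs
end
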